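/- Let (X,κ) be a Lefschetz complex over a ring R with unity. If X admits an acyclic multivector field all of whose multivectors are regular, then X is a zero space, i.e. H^κ(X) = 0. -/

import Mathlib

open scoped Classical

namespace CMVF

variable {R : Type*} [Ring R] {X : Type*} [Fintype X]

/-- A Lefschetz complex over `R` with cells `X`. -/
structure Lefschetz (R : Type*) [Ring R] (X : Type*) [Fintype X] where
  dim : X → ℕ
  κ : X → X → R
  dim_facet : ∀ x y, κ x y ≠ 0 → dim x = dim y + 1
  κ_sq : ∀ x z, (∑ y : X, κ x y * κ y z) = 0

namespace Lefschetz

variable (L : Lefschetz R X)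

/-- The face order `y ≤κ x` : the partial order generated by the facet relation. -/
def le (y x : X) : Prop := Relation.ReflTransGen (fun a b => L.κ b a ≠ 0) y x

/-- Closure of a set of cells: all faces of cells of `A`. -/
def cls (A : Set X) : Set X := {z | ∃ a ∈ A, L.le z a}

/-- Closure of a single cell. -/
def clPt (x : X) : Set X := L.cls {x}

/-- The minimal open set containing `x`. -/
def opn (x : X) : Set X := {z | L.le x z}

/-- `A` is closed. -/
def Closed (A : Set X) : Prop := L.cls A = A

/-- The mouth of `A`. -/
def mo (A : Set X) : Set X := L.cls A \ A

/-- `A` is proper: its mouth is closed. -/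
def Proper (A : Set X) : Prop := L.Closed (L.mo A)

/-- Relative closure within an ambient subcomplex `W`. -/
def clsIn (W A : Set X) : Set X := L.cls A ∩ W

/-- Relative mouth within an ambient subcomplex `W`. -/
def moIn (W A : Set X) : Set X := L.clsIn W A \ A

/-- The boundary operator of the subcomplex determined by `A`
(`∂ x = ∑ y ∈ A, κ x y • y` for `x ∈ A`). -/
noncomputable def bd (A : Set X) : (X → R) →ₗ[R] (X → R) where
  toFun f := fun y => if y ∈ A then ∑ x : X, (if x ∈ A then f x * L.κ x y else 0) else 0
  map_add' f g := by
    funext y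
    by_cases hy : y ∈ A
    · simp only [hy, if_true, Pi.add_apply]
      rw [← Finset.sum_add_distrib]
      refine Finset.sum_congr rfl fun x _ => ?_
      by_cases hx : x ∈ A <;> simp [hx, add_mul]
    · simp [hy]
  map_smul' r f := by
    funext y
    by_cases hy : y ∈ A
    · simp only [hy, if_true, Pi.smul_apply, smul_eq_mul, RingHom.id_apply]
      rw [Finset.mul_sum]
      refine Finset.sum_congr rfl fun x _ => ?_
      by_cases hx : x ∈ A <;> simp [hx, mul_assoc]
    · simp [hy]

/-- The `n`-chains of the subcomplex determined by `A`. -/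
noncomputable def chainGroup (A : Set X) (n : ℕ) : Submodule R (X → R) :=
  Submodule.span R {f | ∃ x ∈ A, L.dim x = n ∧ f = Pi.single x 1}

/-- The `n`-cycles of the subcomplex determined by `A`. -/
noncomputable def cycles (A : Set X) (n : ℕ) : Submodule R (X → R) :=
  L.chainGroup A n ⊓ LinearMap.ker (L.bd A)

/-- The `n`-boundaries of the subcomplex determined by `A`. -/
noncomputable def boundaries (A : Set X) (n : ℕ) : Submodule R (X → R) :=
  (L.chainGroup A (n + 1)).map (L.bd A)

/-- The Lefschetz homology `H^κ_n(A)` of the subcomplex determined by `A`. -/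
noncomputable def homology (A : Set X) (n : ℕ) : Type _ :=
  (L.cycles A n) ⧸ ((L.boundaries A n).comap (L.cycles A n).subtype)

noncomputable instance homologyAddCommGroup (A : Set X) (n : ℕ) :
    AddCommGroup (L.homology A n) :=
  inferInstanceAs (AddCommGroup
    ((L.cycles A n) ⧸ ((L.boundaries A n).comap (L.cycles A n).subtype)))

noncomputable instance homologyModule (A : Set X) (n : ℕ) :
    Module R (L.homology A n) :=
  inferInstanceAs (Module R
    ((L.cycles A n) ⧸ ((L.boundaries A n).comap (L.cycles A n).subtype)))

/-- `A` is a zero space: its Lefschetz homology vanishes. -/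
def HomologyZero (A : Set X) : Prop := ∀ n, Subsingleton (L.homology A n)

/-- The Poincaré polynomial `p_A(t) = ∑ rank H^κ_n(A) tⁿ`. -/
noncomputable def poincare (A : Set X) : Polynomial ℕ :=
  ∑ n ∈ Finset.image L.dim Finset.univ,
    Polynomial.C (Module.finrank R (L.homology A n)) * Polynomial.X ^ n

/-- `V` is a multivector: proper, with a unique maximal element. -/
def IsMV (V : Set X) : Prop :=
  L.Proper V ∧ ∃! m, m ∈ V ∧ ∀ x ∈ V, L.le x m

/-- A regular multivector: one with vanishing Lefschetz homology. -/
def Regular (V : Set X) : Prop := L.HomologyZero V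

end Lefschetz

/-- A combinatorial multivector field on a Lefschetz complex: a partition into multivectors. -/
structure MVField {R : Type*} [Ring R] {X : Type*} [Fintype X] (L : Lefschetz R X) where
  mvs : Set (Set X)
  isMV : ∀ V ∈ mvs, L.IsMV V
  cover : ∀ x : X, ∃! V, V ∈ mvs ∧ x ∈ V

namespace MVField

variable {L : Lefschetz R X} (F : MVField L)

/-- `[x]` : the multivector containing `x`. -/
noncomputable def mclass (x : X) : Set X := (F.cover x).exists.choose

lemma mclass_spec (x : X) : F.mclass x ∈ F.mvs ∧ x ∈ F.mclass x :=
  (F.cover x).exists.choose_spec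

/-- `x★` : the dominant cell of the multivector containing `x`. -/
noncomputable def star (x : X) : X :=
  ((F.isMV _ (F.mclass_spec x).1).2).exists.choose

/-- `[x]°` : the regular part of the multivector of `x`. -/
noncomputable def regPart (x : X) : Set X :=
  if L.Regular (F.mclass x) then F.mclass x else F.mclass x \ {F.star x}

/-- The multivalued map `Π_𝒱`. -/
noncomputable def Pi (x : X) : Set X :=
  if x = F.star x then L.clPt x \ F.regPart x else {F.star x}

/-- The multivalued map of the multivector field restricted to the subcomplex `W`. -/
noncomputable def PiIn (W : Set X) (x : X) : Set X := F.Pi x ∩ W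

/-- `φ : ℤ → X` is a full solution of the multivector field restricted to `W`. -/
def IsSolIn (W : Set X) (φ : ℤ → X) : Prop := ∀ i, φ (i + 1) ∈ F.PiIn W (φ i)

/-- There is a full solution (of the field restricted to `W`) through `x` with values in `A`. -/
def FullSolThroughIn (W : Set X) (x : X) (A : Set X) : Prop :=
  ∃ φ : ℤ → X, F.IsSolIn W φ ∧ (∃ i, φ i = x) ∧ ∀ i, φ i ∈ A

/-- `A` is `𝒱`-compatible. -/
def Compat (A : Set X) : Prop := ∀ x ∈ A, F.mclass x ⊆ A

/-- `[A]⁻` : the maximal `𝒱`-compatible subset of `A`. -/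
def lowerC (A : Set X) : Set X := {x ∈ A | F.mclass x ⊆ A}

/-- `[A]⁺` : the minimal `𝒱`-compatible superset of `A`. -/
def upperC (A : Set X) : Set X := ⋃ x ∈ A, F.mclass x

/-- `Inv A`, the invariant part of `A`, computed in the subcomplex `W`. -/
def InvPartIn (W A : Set X) : Set X :=
  {x ∈ A | F.FullSolThroughIn W (F.star x) (F.lowerC A)}

/-- `A` is invariant (within the subcomplex `W`). -/
def InvariantIn (W A : Set X) : Prop := F.InvPartIn W A = A

/-- `φ` is a path (solution) on the integer interval `[a,b]`, within the subcomplex `W`. -/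
def IsPathOnIn (W : Set X) (a b : ℤ) (φ : ℤ → X) : Prop :=
  ∀ i, a ≤ i → i < b → φ (i + 1) ∈ F.PiIn W (φ i)

/-- `S` admits an internal tangency within the subcomplex `W`. -/
def HasInternalTangencyIn (W S : Set X) : Prop :=
  ∃ (a b : ℤ) (φ : ℤ → X), a ≤ b ∧ F.IsPathOnIn W a b φ ∧
    (∀ i, a ≤ i → i ≤ b → φ i ∈ L.clsIn W S) ∧ φ a ∈ S ∧ φ b ∈ S ∧
    ∃ i, a ≤ i ∧ i ≤ b ∧ φ i ∈ L.moIn W S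

/-- `S` is an isolated invariant set within the subcomplex `W`. -/
def IsoInvIn (W S : Set X) : Prop :=
  F.InvariantIn W S ∧ ¬ F.HasInternalTangencyIn W S

/-- `N` is a trapping region within the subcomplex `W`. -/
def TrappingIn (W N : Set X) : Prop :=
  N ⊆ W ∧ F.Compat N ∧ ∀ x ∈ N, F.PiIn W x ⊆ N

/-- `N` is a backward trapping region within the subcomplex `W`. -/
def BackTrappingIn (W N : Set X) : Prop :=
  N ⊆ W ∧ F.Compat N ∧ ∀ x ∈ W, ∀ y ∈ F.PiIn W x, y ∈ N → x ∈ N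

/-- `A` is an attractor within the subcomplex `W`. -/
def AttractorIn (W A : Set X) : Prop :=
  ∃ N, F.TrappingIn W N ∧ A = F.InvPartIn W N

/-- `A` is a repeller within the subcomplex `W`. -/
def RepellerIn (W A : Set X) : Prop :=
  ∃ N, F.BackTrappingIn W N ∧ A = F.InvPartIn W N

/-- The α-limit set of a full solution `φ`. -/
def alphaIn (W : Set X) (φ : ℤ → X) : Set X :=
  ⋂ k : ℕ, F.InvPartIn W (F.upperC (φ '' {i : ℤ | i ≤ -(k : ℤ)}))

/-- The ω-limit set of a full solution `φ`. -/
def omegaIn (W : Set X) (φ : ℤ → X) : Set X :=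
  ⋂ k : ℕ, F.InvPartIn W (F.upperC (φ '' {i : ℤ | (k : ℤ) ≤ i}))

/-- `C(A',A)` : the set of cells lying on connections running from `A'` to `A`. -/
def ConnIn (W A' A : Set X) : Set X :=
  {x | ∃ φ : ℤ → X, F.IsSolIn W φ ∧ (∃ i, φ i = F.star x) ∧
        F.alphaIn W φ ⊆ A' ∧ F.omegaIn W φ ⊆ A}

/-- `(A, Rp)` is an attractor-repeller pair in the subcomplex `W`. -/
def ARPairIn (W A Rp : Set X) : Prop :=
  F.AttractorIn W A ∧ F.RepellerIn W Rp ∧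
    A = F.InvPartIn W (W \ Rp) ∧ Rp = F.InvPartIn W (W \ A)

/-- `M` is a Morse decomposition of the subcomplex `W`, with admissible order `le`. -/
def MorseDecompIn (W : Set X) {P : Type*} [Finite P] (le : P → P → Prop)
    (M : P → Set X) : Prop :=
  IsPartialOrder P le ∧
  (∀ r, F.IsoInvIn W (M r)) ∧
  (∀ r r', r ≠ r' → Disjoint (M r) (M r')) ∧
  (∀ φ : ℤ → X, F.IsSolIn W φ →
    ∃ r r', le r r' ∧ F.alphaIn W φ ⊆ M r' ∧ F.omegaIn W φ ⊆ M r) ∧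
  (∀ φ : ℤ → X, F.IsSolIn W φ → ∀ r,
    F.alphaIn W φ ⊆ M r → F.omegaIn W φ ⊆ M r → Set.range φ ⊆ M r)

/-- The Morse set `M(I)` of a family of sets indexed by `I ⊆ P`. -/
def MorseSetIn (W : Set X) {P : Type*} (M : P → Set X) (I : Set P) : Set X :=
  ⋃ r ∈ I, ⋃ r' ∈ I, F.ConnIn W (M r') (M r)

/-- `(P₁, P₂)` is an index pair for the isolated invariant set `S`. -/
def IndexPair (S P₁ P₂ : Set X) : Prop :=
  L.Closed P₁ ∧ L.Closed P₂ ∧ P₂ ⊆ P₁ ∧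
  (∀ x ∈ P₂, ∀ y ∈ F.Pi x, y ∈ P₁ → y ∈ P₂) ∧
  (∀ x ∈ P₁, (∃ y ∈ F.Pi x, y ∉ P₁) → x ∈ P₂) ∧
  S = F.InvPartIn Set.univ (P₁ \ P₂)

/-- `x ⤳_A y` : there is a path of length at least two in `A` from `x★` to `y★`. -/
def PathConn (A : Set X) (x y : X) : Prop :=
  ∃ (a b : ℤ) (φ : ℤ → X), a < b ∧
    (∀ i, a ≤ i → i < b → φ (i + 1) ∈ F.Pi (φ i)) ∧
    (∀ i, a ≤ i → i ≤ b → φ i ∈ A) ∧ φ a = F.star x ∧ φ b = F.star y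

/-- The chain recurrent set. -/
def CR : Set X := {x | F.PathConn Set.univ x x}

/-- `B` is a basic set: an equivalence class of mutual connectedness in `CR`. -/
def IsBasicSet (B : Set X) : Prop :=
  ∃ x ∈ F.CR, B = {y ∈ F.CR | F.PathConn Set.univ x y ∧ F.PathConn Set.univ y x}

/-- The set `E_P` of cells of `P₁` all of whose forward solutions meet `P₂`. -/
def Ep (P₁ P₂ : Set X) : Set X :=
  {x ∈ P₁ | ∀ φ : ℕ → X, φ 0 = x → (∀ i, φ (i + 1) ∈ F.Pi (φ i)) → ∃ i, φ i ∈ P₂}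

/-- The preorder `≤_𝒱` induced by the arrows of the multivector field. -/
def leV : X → X → Prop := Relation.ReflTransGen (fun y x => y ∈ F.Pi x)

/-- The multivector field is acyclic: `≤_𝒱` is a partial order. -/
def Acyclic : Prop := ∀ x y, F.leV x y → F.leV y x → x = y

end MVField

end CMVF

/-! Let `B` be closed and `𝒱`-compatible and let `V ⊆ B` be the multivector whose dominant cell
is `≤_𝒱`-maximal among those of `B`. Acyclicity makes `V` open in `B`, i.e. `B \ V` is closed,
and the long exact sequence of the pair `(B, B \ V)` shows that `B` is a zero space as soon as
`V` and `B \ V` are. Induction on the number of cells, starting from `B = X`. -/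

namespace CMVF

namespace Lefschetz

variable {R : Type*} [Ring R] {X : Type*} [Fintype X] (L : Lefschetz R X)

theorem mem_chainGroup_iff {A : Set X} {n : ℕ} {f : X → R} :
    f ∈ L.chainGroup A n ↔ ∀ x, f x ≠ 0 → x ∈ A ∧ L.dim x = n := by
  constructor
  · intro hf
    induction hf using Submodule.span_induction with
    | mem g hg =>
      obtain ⟨x, hx, hdim, rfl⟩ := hg
      intro y hy
      obtain rfl : y = x := by by_contra hyx; simp [hyx] at hy
      exact ⟨hx, hdim⟩
    | zero => simp
    | add g h _ _ hg hh =>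
      intro x hx
      by_cases hgx : g x = 0
      · exact hh x (by simpa [hgx] using hx)
      · exact hg x hgx
    | smul r g _ hg => exact fun x hx => hg x (right_ne_zero_of_mul hx)
  · intro hf
    rw [← Finset.univ_sum_single f]
    refine Submodule.sum_mem _ fun x _ => ?_
    by_cases hfx : f x = 0
    · simp [hfx]
    · rw [← mul_one (f x), ← smul_eq_mul, Pi.single_smul]
      exact Submodule.smul_mem _ _
        (Submodule.subset_span ⟨x, (hf x hfx).1, (hf x hfx).2, rfl⟩)

theorem homologyZero_iff {A : Set X} :
    L.HomologyZero A ↔ ∀ n, L.cycles A n ≤ L.boundaries A n :=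
  forall_congr' fun _ =>
    Submodule.Quotient.subsingleton_iff.trans Submodule.comap_subtype_eq_top

theorem homologyZero_empty : L.HomologyZero ∅ := by
  refine L.homologyZero_iff.2 fun n z hz => ?_
  have hz0 : z = 0 := funext fun x =>
    by_contra fun hx => ((L.mem_chainGroup_iff.1 (Submodule.mem_inf.1 hz).1) x hx).1
  exact hz0 ▸ Submodule.zero_mem _

theorem closed_iff_facet {A : Set X} :
    L.Closed A ↔ ∀ x ∈ A, ∀ y, L.κ x y ≠ 0 → y ∈ A := by
  constructor
  · intro hA x hx y hxy
    exact hA ▸ ⟨x, hx, Relation.ReflTransGen.single hxy⟩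
  · refine fun hA => Set.Subset.antisymm ?_ fun z hz => ⟨z, hz, Relation.ReflTransGen.refl⟩
    rintro z ⟨a, ha, hza⟩
    induction hza using Relation.ReflTransGen.head_induction_on with
    | refl => exact ha
    | head hstep _ ih => exact hA _ ih _ hstep

theorem closed_univ : L.Closed Set.univ :=
  L.closed_iff_facet.2 fun _ _ _ _ => trivial

theorem bd_univ_apply (f : X → R) (y : X) : L.bd Set.univ f y = ∑ x, f x * L.κ x y := by
  simp [bd]

theorem bd_eq_indicator (A : Set X) (f : X → R) :
    L.bd A f = A.indicator (L.bd Set.univ (A.indicator f)) := by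
  funext y
  simp [bd, Set.indicator_apply, ite_mul]

theorem bd_indicator_self (A : Set X) (f : X → R) : L.bd A (A.indicator f) = L.bd A f := by
  rw [bd_eq_indicator, Set.indicator_indicator, Set.inter_self, ← bd_eq_indicator]

theorem bd_univ_bd_univ (f : X → R) : L.bd Set.univ (L.bd Set.univ f) = 0 := by
  funext z
  simp only [bd_univ_apply, Finset.sum_mul, mul_assoc, Pi.zero_apply]
  rw [Finset.sum_comm]
  simp [← Finset.mul_sum, L.κ_sq]

theorem support_bd_univ_subset {A : Set X} (hA : L.Closed A) {f : X → R}
    (hf : Function.support f ⊆ A) : Function.support (L.bd Set.univ f) ⊆ A := by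
  intro y hy
  rw [Function.mem_support, bd_univ_apply] at hy
  obtain ⟨x, -, hx⟩ := Finset.exists_ne_zero_of_sum_ne_zero hy
  exact L.closed_iff_facet.1 hA x (hf (left_ne_zero_of_mul hx)) y (right_ne_zero_of_mul hx)

theorem bd_eq_bd_univ {A : Set X} (hA : L.Closed A) {f : X → R}
    (hf : Function.support f ⊆ A) : L.bd A f = L.bd Set.univ f := by
  rw [bd_eq_indicator, Set.indicator_eq_self.2 hf,
    Set.indicator_eq_self.2 (L.support_bd_univ_subset hA hf)]

theorem bd_univ_mem_chainGroup {A : Set X} (hA : L.Closed A) {n : ℕ} {f : X → R}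
    (hf : f ∈ L.chainGroup A (n + 1)) : L.bd Set.univ f ∈ L.chainGroup A n := by
  rw [mem_chainGroup_iff] at hf ⊢
  refine fun y hy => ⟨L.support_bd_univ_subset hA (fun x hx => (hf x hx).1) hy, ?_⟩
  rw [bd_univ_apply] at hy
  obtain ⟨x, -, hx⟩ := Finset.exists_ne_zero_of_sum_ne_zero hy
  have := L.dim_facet x y (right_ne_zero_of_mul hx)
  have := (hf x (left_ne_zero_of_mul hx)).2
  omega

theorem indicator_diff_bd_univ {A B : Set X} (hA : L.Closed A) {f : X → R}
    (hf : Function.support f ⊆ B) :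
    (B \ A).indicator (L.bd Set.univ f) = L.bd (B \ A) f := by
  set V := B \ A
  have hrest : Function.support (f - V.indicator f) ⊆ A := by
    intro x hx
    by_contra hxA
    have hxV : x ∈ V := ⟨hf fun h => hx (by simp [h]), hxA⟩
    simp [Set.indicator_of_mem hxV] at hx
  have hinvisible : V.indicator (L.bd Set.univ (f - V.indicator f)) = 0 :=
    Set.indicator_eq_zero'.2 <| Set.disjoint_left.2 fun _ hx hxV =>
      hxV.2 (L.support_bd_univ_subset hA hrest hx)
  calc V.indicator (L.bd Set.univ f)
      = V.indicator (L.bd Set.univ (V.indicator f) + L.bd Set.univ (f - V.indicator f)) := by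
        rw [← map_add, add_sub_cancel]
    _ = L.bd V f := by rw [Set.indicator_add', hinvisible, add_zero, ← bd_eq_indicator]

theorem chainGroup_mono {A B : Set X} (hAB : A ⊆ B) (n : ℕ) :
    L.chainGroup A n ≤ L.chainGroup B n :=
  Submodule.span_mono fun _ ⟨x, hx, hdim, hf⟩ => ⟨x, hAB hx, hdim, hf⟩

theorem support_subset_of_mem_chainGroup {A : Set X} {n : ℕ} {f : X → R}
    (hf : f ∈ L.chainGroup A n) : Function.support f ⊆ A :=
  fun x hx => (L.mem_chainGroup_iff.1 hf x hx).1

theorem indicator_mem_cycles {A B : Set X} (hA : L.Closed A) (hB : L.Closed B) {n : ℕ}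
    {z : X → R} (hz : z ∈ L.cycles B n) : (B \ A).indicator z ∈ L.cycles (B \ A) n := by
  obtain ⟨hzc, hzb⟩ := Submodule.mem_inf.1 hz
  have hzB := L.support_subset_of_mem_chainGroup hzc
  refine Submodule.mem_inf.2 ⟨L.mem_chainGroup_iff.2 fun x hx => ?_, ?_⟩
  · have hxV := Set.mem_of_indicator_ne_zero hx
    exact ⟨hxV, (L.mem_chainGroup_iff.1 hzc x (by rwa [Set.indicator_of_mem hxV] at hx)).2⟩
  · rw [LinearMap.mem_ker, bd_indicator_self, ← L.indicator_diff_bd_univ hA hzB,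
      ← L.bd_eq_bd_univ hB hzB, LinearMap.mem_ker.1 hzb, Set.indicator_zero']

theorem homologyZero_of_closed_subset {A B : Set X} (hB : L.Closed B) (hA : L.Closed A)
    (hAB : A ⊆ B) (hA0 : L.HomologyZero A) (hBA : L.HomologyZero (B \ A)) :
    L.HomologyZero B := by
  rw [homologyZero_iff] at hA0 hBA ⊢
  intro n z hz
  obtain ⟨hzc, hzb⟩ := Submodule.mem_inf.1 hz
  have hzB := L.support_subset_of_mem_chainGroup hzc
  obtain ⟨w, hwc, hw⟩ := Submodule.mem_map.1 (hBA n (L.indicator_mem_cycles hA hB hz))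
  have hwc' : w ∈ L.chainGroup B (n + 1) := L.chainGroup_mono Set.sdiff_subset _ hwc
  have hDwc := L.bd_univ_mem_chainGroup hB hwc'
  set z' := z - L.bd Set.univ w
  have hz'c : z' ∈ L.chainGroup B n := sub_mem hzc hDwc
  have hz'V : (B \ A).indicator z' = 0 := by
    rw [Set.indicator_sub', L.indicator_diff_bd_univ hA (L.support_subset_of_mem_chainGroup hwc'), hw,
      sub_self]
  have hz'A : Function.support z' ⊆ A := fun x hx => by
    by_contra hxA
    have hxV : x ∈ B \ A := ⟨L.support_subset_of_mem_chainGroup hz'c hx, hxA⟩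
    exact hx (by rw [← Set.indicator_of_mem hxV z', hz'V, Pi.zero_apply])
  have hz' : z' ∈ L.cycles A n := by
    refine Submodule.mem_inf.2 ⟨L.mem_chainGroup_iff.2 fun x hx => ⟨hz'A hx, ?_⟩, ?_⟩
    · exact (L.mem_chainGroup_iff.1 hz'c x hx).2
    · rw [LinearMap.mem_ker, L.bd_eq_bd_univ hA hz'A, map_sub, bd_univ_bd_univ,
        ← L.bd_eq_bd_univ hB hzB, LinearMap.mem_ker.1 hzb, sub_zero]
  obtain ⟨w', hw'c, hw'⟩ := Submodule.mem_map.1 (hA0 n hz')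
  have hsum := add_mem hwc' (L.chainGroup_mono hAB _ hw'c)
  refine Submodule.mem_map.2 ⟨w + w', hsum, ?_⟩
  rw [L.bd_eq_bd_univ hB (L.support_subset_of_mem_chainGroup hsum), map_add,
    ← L.bd_eq_bd_univ hA (L.support_subset_of_mem_chainGroup hw'c), hw', add_sub_cancel]

end Lefschetz

end CMVF

namespace CMVF

namespace MVField

variable {R : Type*} [Ring R] {X : Type*} [Fintype X] {L : Lefschetz R X} (F : MVField L)

theorem mem_mclass_self (x : X) : x ∈ F.mclass x := (F.mclass_spec x).2

theorem mclass_eq_of_mem {x y : X} (h : y ∈ F.mclass x) : F.mclass y = F.mclass x :=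
  (F.cover y).unique (F.mclass_spec y) ⟨(F.mclass_spec x).1, h⟩

theorem star_spec (x : X) : F.star x ∈ F.mclass x ∧ ∀ y ∈ F.mclass x, L.le y (F.star x) :=
  (F.isMV _ (F.mclass_spec x).1).2.exists.choose_spec

theorem star_eq_of_mem {x y : X} (h : y ∈ F.mclass x) : F.star y = F.star x := by
  have hyx := F.mclass_eq_of_mem h
  exact (F.isMV _ (F.mclass_spec x).1).2.unique (hyx ▸ F.star_spec y) (F.star_spec x)

theorem star_star (x : X) : F.star (F.star x) = F.star x :=
  F.star_eq_of_mem (F.star_spec x).1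

theorem star_leV (x : X) : F.leV (F.star x) x := by
  by_cases hx : x = F.star x
  · exact hx ▸ Relation.ReflTransGen.refl
  · exact Relation.ReflTransGen.single (by rw [Pi, if_neg hx]; rfl)

theorem leV_star_of_facet {x y : X} (hreg : L.Regular (F.mclass x)) (hxy : L.κ x y ≠ 0)
    (hy : y ∉ F.mclass x) : F.leV y (F.star x) := by
  have hstar : F.mclass (F.star x) = F.mclass x := F.mclass_eq_of_mem (F.star_spec x).1
  refine Relation.ReflTransGen.single ?_
  rw [Pi, if_pos (F.star_star x).symm, regPart, hstar, if_pos hreg]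
  exact ⟨⟨F.star x, rfl, .trans (.single hxy) ((F.star_spec x).2 x (F.mem_mclass_self x))⟩, hy⟩

theorem Compat.diff_mclass {F : MVField L} {B : Set X} (hB : F.Compat B) (m : X) :
    F.Compat (B \ F.mclass m) := by
  refine fun x hx z hz => ⟨hB x hx.1 hz, fun hzm => hx.2 ?_⟩
  rw [← F.mclass_eq_of_mem hzm, F.mclass_eq_of_mem hz]
  exact F.mem_mclass_self x

/-- A cell of `B` outside `[m]` with a facet in `[m]` would have its dominant cell `≤_𝒱`-above
`m★`, through `Π_𝒱`; so taking `m★` maximal makes `[m]` open in `B`. -/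
theorem exists_closed_diff_mclass (hac : F.Acyclic) (hreg : ∀ V ∈ F.mvs, L.Regular V)
    {B : Set X} (hB : L.Closed B) (hne : B.Nonempty) :
    ∃ m ∈ B, L.Closed (B \ F.mclass m) := by
  let _ : Preorder X :=
    { le := F.leV
      le_refl := fun _ => .refl
      le_trans := fun _ _ _ => .trans }
  obtain ⟨b, hbB, hbmax⟩ := (Set.toFinite B).exists_maximalFor F.star B hne
  refine ⟨b, hbB, L.closed_iff_facet.2 fun x hx y hxy => ⟨L.closed_iff_facet.1 hB x hx.1 y hxy,
    fun hyb => hx.2 ?_⟩⟩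
  have hyx : y ∉ F.mclass x := fun hyx => hx.2 <| by
    rw [← F.mclass_eq_of_mem hyb, F.mclass_eq_of_mem hyx]
    exact F.mem_mclass_self x
  have hby : F.leV (F.star b) y := F.star_eq_of_mem hyb ▸ F.star_leV y
  have hbx : F.leV (F.star b) (F.star x) :=
    hby.trans (F.leV_star_of_facet (hreg _ (F.mclass_spec x).1) hxy hyx)
  have hxb : F.star x = F.star b := hac _ _ (hbmax hx.1 hbx) hbx
  rw [← F.mclass_eq_of_mem (F.star_spec b).1, ← hxb, F.mclass_eq_of_mem (F.star_spec x).1]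
  exact F.mem_mclass_self x

theorem homologyZero_of_closed_of_compat (hac : F.Acyclic) (hreg : ∀ V ∈ F.mvs, L.Regular V)
    {B : Set X} (hB : L.Closed B) (hBc : F.Compat B) : L.HomologyZero B := by
  induction hcard : B.ncard using Nat.strong_induction_on generalizing B with
  | _ k ih =>
  rcases B.eq_empty_or_nonempty with rfl | hne
  · exact L.homologyZero_empty
  obtain ⟨m, hmB, hclosed⟩ := F.exists_closed_diff_mclass hac hreg hB hne
  have hlt : (B \ F.mclass m).ncard < k :=
    hcard ▸ Set.ncard_lt_ncard ⟨Set.sdiff_subset, fun h => (h hmB).2 (F.mem_mclass_self m)⟩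
  refine L.homologyZero_of_closed_subset hB hclosed Set.sdiff_subset
    (ih _ hlt hclosed (hBc.diff_mclass m) rfl) ?_
  rw [Set.sdiff_sdiff_cancel_left (hBc m hmB)]
  exact hreg _ (F.mclass_spec m).1

end MVField

end CMVF

open CMVF

variable {R : Type*} [Ring R] {X : Type*} [Fintype X]

/-- Theorem: if `X` admits an acyclic multivector field all of whose multivectors are
regular, then `X` is a zero space (`H^κ(X) = 0`). -/
theorem acyclic_regular_zero_space (L : Lefschetz R X)
    (h : ∃ F : MVField L, F.Acyclic ∧ ∀ V ∈ F.mvs, L.Regular V) :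
    L.HomologyZero (Set.univ : Set X) := by
  obtain ⟨F, hac, hreg⟩ := h
  exact F.homologyZero_of_closed_of_compat hac hreg L.closed_univ fun _ _ _ _ => trivial
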